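/- arXiv:2511.06643 — 2 statements merged into one kernel-verified Lean document; each statement's English description precedes it below -/
import Mathlib

section
/- Let G be a connected threshold graph with vertices ordered so that deg(v₁) ≥ deg(v₂) ≥ ... ≥ deg(v_n), and let y = (y₁,...,y_n) be the Perron vector of A_α(G) with 0 ≤ α < 1. Then y₁ ≥ y₂ ≥ ... ≥ y_n, and deg(v_i) = deg(v_j) implies y_i = y_j. -/
/-!
In a threshold graph any two neighbourhoods are nested, since a pair `a ~ i`, `b ~ j` with
`a ≁ j`, `b ≁ i` induces a `C₄`, a `P₄` or a `2K₂` on `{i, j, a, b}`. So if `d_j ≤ d_i` then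
`N(j) \ {i} ⊆ N(i) \ {j}`. Compare the eigenvalue equations
`ρ y_v = α d_v y_v + (1 - α) ∑_{u ~ v} y_u` at `i` and `j`: if `y_i < y_j`, then
`(ρ - α d_j) y_j ≤ (ρ - α d_i) y_i ≤ (ρ - α d_j) y_i`, which contradicts `ρ > α d_j`
(a consequence of `j` having a neighbour).
-/

open SimpleGraph

/-- The graph `2K₂` on four vertices: two disjoint edges. -/
def twoK2 : SimpleGraph (Fin 4) :=
  SimpleGraph.fromRel (fun a b => (a = 0 ∧ b = 1) ∨ (a = 2 ∧ b = 3))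

/-- A graph is a threshold graph if it has no induced subgraph isomorphic to
`2K₂`, `C₄` or `P₄`.  (Graph embeddings are induced-subgraph embeddings.) -/
def IsThreshold {V : Type} (G : SimpleGraph V) : Prop :=
  IsEmpty (twoK2 ↪g G) ∧ IsEmpty (SimpleGraph.cycleGraph 4 ↪g G) ∧
    IsEmpty (SimpleGraph.pathGraph 4 ↪g G)

open Matrix

noncomputable def Aalpha {n : ℕ} (G : SimpleGraph (Fin n)) (α : ℝ) :
    Matrix (Fin n) (Fin n) ℝ :=
  letI := Classical.decRel G.Adj
  α • Matrix.diagonal (fun v => (G.degree v : ℝ)) + (1 - α) • G.adjMatrix ℝ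

def IsMaxEigenvalue {n : ℕ} (M : Matrix (Fin n) (Fin n) ℝ) (q : ℝ) : Prop :=
  (∃ x : Fin n → ℝ, x ≠ 0 ∧ M.mulVec x = q • x) ∧
  ∀ (μ : ℝ) (x : Fin n → ℝ), x ≠ 0 → M.mulVec x = μ • x → μ ≤ q

noncomputable def deg {n : ℕ} (G : SimpleGraph (Fin n)) (v : Fin n) : ℕ :=
  letI := Classical.decRel G.Adj
  G.degree v

namespace SimpleGraph

variable {V : Type} {G : SimpleGraph V}

lemma nonempty_embedding_of_adj_iff {H : SimpleGraph (Fin 4)} {a b c d : V}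
    (hnodup : [a, b, c, d].Nodup)
    (hadj : ∀ x y, G.Adj (![a, b, c, d] x) (![a, b, c, d] y) ↔ H.Adj x y) :
    Nonempty (H ↪g G) := by
  refine ⟨⟨⟨![a, b, c, d], ?_⟩, hadj _ _⟩⟩
  intro x y
  fin_cases x <;> fin_cases y <;> simp_all [eq_comm]

lemma IsThreshold.neighbors_nested (hG : IsThreshold G) (i j : V) :
    (∀ k, G.Adj i k → k ≠ j → G.Adj j k) ∨ (∀ k, G.Adj j k → k ≠ i → G.Adj i k) := by
  by_contra! ⟨⟨a, hia, haj, hja⟩, ⟨b, hjb, hbi, hib⟩⟩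
  have hai : a ≠ i := hia.ne'
  have hbj : b ≠ j := hjb.ne'
  have hab : a ≠ b := by rintro rfl; exact hib hia
  have hij : i ≠ j := by rintro rfl; exact hja hia
  by_cases hij' : G.Adj i j <;> by_cases hab' : G.Adj a b
  · refine hG.2.1.elim (nonempty_embedding_of_adj_iff (a := a) (b := i) (c := j) (d := b)
      (by simp; grind) fun x y => ?_).some
    fin_cases x <;> fin_cases y <;> simp [cycleGraph_adj, G.adj_comm, *] <;> decide
  · refine hG.2.2.elim (nonempty_embedding_of_adj_iff (a := a) (b := i) (c := j) (d := b)
      (by simp; grind) fun x y => ?_).some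
    fin_cases x <;> fin_cases y <;> simp [pathGraph_adj, G.adj_comm, *]
  · refine hG.2.2.elim (nonempty_embedding_of_adj_iff (a := i) (b := a) (c := b) (d := j)
      (by simp; grind) fun x y => ?_).some
    fin_cases x <;> fin_cases y <;> simp [pathGraph_adj, G.adj_comm, *]
  · refine hG.1.elim (nonempty_embedding_of_adj_iff (a := i) (b := a) (c := j) (d := b)
      (by simp; grind) fun x y => ?_).some
    fin_cases x <;> fin_cases y <;> simp [twoK2, G.adj_comm, *]

variable [Fintype V] [DecidableRel G.Adj]

lemma IsThreshold.neighborFinset_erase_subset_of_degree_le [DecidableEq V] (hG : IsThreshold G)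
    {i j : V} (hdeg : G.degree j ≤ G.degree i) :
    (G.neighborFinset j).erase i ⊆ (G.neighborFinset i).erase j := by
  have hcard : ((G.neighborFinset j).erase i).card ≤ ((G.neighborFinset i).erase j).card := by
    simp only [Finset.card_erase_eq_ite, mem_neighborFinset, card_neighborFinset_eq_degree,
      G.adj_comm j i]
    split_ifs <;> omega
  rcases hG.neighbors_nested i j with h | h
  · have hsub : (G.neighborFinset i).erase j ⊆ (G.neighborFinset j).erase i := by
      intro k hk
      simp only [Finset.mem_erase, mem_neighborFinset] at hk ⊢
      exact ⟨(G.adj_symm hk.2).ne, h k hk.2 hk.1⟩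
    exact (Finset.eq_of_subset_of_card_le hsub hcard).ge
  · intro k hk
    simp only [Finset.mem_erase, mem_neighborFinset] at hk ⊢
    exact ⟨(G.adj_symm hk.2).ne, h k hk.2 hk.1⟩

lemma sum_neighborFinset_eq_ite_add [DecidableEq V] {M : Type*} [AddCommMonoid M] (f : V → M)
    (i j : V) :
    ∑ u ∈ G.neighborFinset i, f u
      = (if G.Adj i j then f j else 0) + ∑ u ∈ (G.neighborFinset i).erase j, f u := by
  split_ifs with h
  · exact (Finset.add_sum_erase _ _ ((G.mem_neighborFinset i j).mpr h)).symm
  · rw [Finset.erase_eq_of_notMem (by simpa using h), zero_add]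

section Eigenvector

variable {α ρ : ℝ} {y : V → ℝ}

lemma mul_degree_lt_of_eigen (hα1 : α < 1) (hy : ∀ v, 0 < y v)
    (heq : ∀ v, α * G.degree v * y v + (1 - α) * ∑ u ∈ G.neighborFinset v, y u = ρ * y v)
    {v : V} (hv : 0 < G.degree v) : α * G.degree v < ρ := by
  have hsum : 0 < ∑ u ∈ G.neighborFinset v, y u :=
    Finset.sum_pos (fun u _ => hy u) (Finset.card_pos.mp (by simpa using hv))
  have : 0 < (ρ - α * G.degree v) * y v := by
    nlinarith [heq v, mul_pos (sub_pos.mpr hα1) hsum]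
  exact sub_pos.mp (pos_of_mul_pos_left this (hy v).le)

theorem le_of_neighborFinset_erase_subset [DecidableEq V] (hα0 : 0 ≤ α) (hα1 : α < 1)
    (hy : ∀ v, 0 < y v)
    (heq : ∀ v, α * G.degree v * y v + (1 - α) * ∑ u ∈ G.neighborFinset v, y u = ρ * y v)
    {i j : V} (hj : 0 < G.degree j) (hdeg : G.degree j ≤ G.degree i)
    (hsub : (G.neighborFinset j).erase i ⊆ (G.neighborFinset i).erase j) : y j ≤ y i := by
  by_contra! hlt
  have hρ : 0 < ρ - α * G.degree j := sub_pos.mpr (mul_degree_lt_of_eigen hα1 hy heq hj)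
  have hc : (if G.Adj i j then y i else 0) ≤ (if G.Adj i j then y j else 0) := by
    split_ifs <;> linarith
  have hs : ∑ u ∈ (G.neighborFinset j).erase i, y u ≤ ∑ u ∈ (G.neighborFinset i).erase j, y u :=
    Finset.sum_le_sum_of_subset_of_nonneg hsub fun u _ _ => (hy u).le
  have heq_i := heq i
  have heq_j := heq j
  rw [sum_neighborFinset_eq_ite_add y i j] at heq_i
  rw [sum_neighborFinset_eq_ite_add y j i] at heq_j
  simp only [G.adj_comm j i] at heq_j
  refine lt_irrefl ((ρ - α * G.degree j) * y j) ?_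
  calc (ρ - α * G.degree j) * y j
      = (1 - α) * ((if G.Adj i j then y i else 0) + ∑ u ∈ (G.neighborFinset j).erase i, y u) := by
        linarith
    _ ≤ (1 - α) * ((if G.Adj i j then y j else 0) + ∑ u ∈ (G.neighborFinset i).erase j, y u) := by
        gcongr
    _ = (ρ - α * G.degree i) * y i := by linarith
    _ ≤ (ρ - α * G.degree j) * y i := by gcongr; exact (hy i).le
    _ < (ρ - α * G.degree j) * y j := mul_lt_mul_of_pos_left hlt hρ

end Eigenvector

end SimpleGraph

lemma deg_eq_degree {n : ℕ} (G : SimpleGraph (Fin n)) [DecidableRel G.Adj] (v : Fin n) :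
    deg G v = G.degree v := by
  unfold deg
  convert rfl

lemma Aalpha_mulVec_apply {n : ℕ} (G : SimpleGraph (Fin n)) [DecidableRel G.Adj] (α : ℝ)
    (y : Fin n → ℝ) (v : Fin n) :
    (Aalpha G α *ᵥ y) v = α * G.degree v * y v + (1 - α) * ∑ u ∈ G.neighborFinset v, y u := by
  rw [Aalpha, add_mulVec, smul_mulVec, smul_mulVec]
  simp only [mulVec_diagonal, adjMatrix_mulVec_apply, Pi.add_apply, Pi.smul_apply, smul_eq_mul,
    mul_assoc]
  convert rfl

theorem stmt12_general {n : ℕ} (G : SimpleGraph (Fin n)) (hconn : G.Connected)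
    (hth : IsThreshold G)
    (hsort : ∀ i j : Fin n, i ≤ j → deg G j ≤ deg G i)
    (α : ℝ) (hα0 : 0 ≤ α) (hα1 : α < 1)
    (ρ : ℝ) (y : Fin n → ℝ) (hy : ∀ v, 0 < y v)
    (hev : (Aalpha G α).mulVec y = ρ • y) :
    (∀ i j : Fin n, i ≤ j → y j ≤ y i) ∧
    (∀ i j : Fin n, deg G i = deg G j → y i = y j) := by
  classical
  have heq : ∀ v, α * G.degree v * y v + (1 - α) * ∑ u ∈ G.neighborFinset v, y u = ρ * y v :=
    fun v => by rw [← Aalpha_mulVec_apply, hev, Pi.smul_apply, smul_eq_mul]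
  have key : ∀ i j, deg G j ≤ deg G i → y j ≤ y i := by
    intro i j hdeg
    rw [deg_eq_degree, deg_eq_degree] at hdeg
    rcases eq_or_ne i j with rfl | hij
    · rfl
    exact le_of_neighborFinset_erase_subset hα0 hα1 hy heq
      ((hconn.preconnected i j).degree_pos_right hij) hdeg
      (hth.neighborFinset_erase_subset_of_degree_le hdeg)
  exact ⟨fun i j h => key i j (hsort i j h),
    fun i j h => le_antisymm (key j i h.le) (key i j h.ge)⟩

theorem stmt12 {n : ℕ} (G : SimpleGraph (Fin n)) (hconn : G.Connected)
    (hth : IsThreshold G)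
    (hsort : ∀ i j : Fin n, i ≤ j → deg G j ≤ deg G i)
    (α : ℝ) (hα0 : 0 ≤ α) (hα1 : α < 1)
    (ρ : ℝ) (y : Fin n → ℝ) (hy : ∀ v, 0 < y v)
    (hev : (Aalpha G α).mulVec y = ρ • y)
    (hmax : IsMaxEigenvalue (Aalpha G α) ρ) :
    (∀ i j : Fin n, i ≤ j → y j ≤ y i) ∧
    (∀ i j : Fin n, deg G i = deg G j → y i = y j) :=
  stmt12_general G hconn hth hsort α hα0 hα1 ρ y hy hev
end

section
/- For n ≥ 4, the signless Laplacian spectral radius of S_{n,2n-2} = K₂ ∨ (K_{1,1} ∪ (n-4)K₁) satisfies q(S_{n,2n-2}) ≥ n + 1.6. -/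
open Matrix SimpleGraph

noncomputable def signlessLaplacian {n : ℕ} (G : SimpleGraph (Fin n)) :
    Matrix (Fin n) (Fin n) ℝ :=
  letI := Classical.decRel G.Adj
  Matrix.diagonal (fun v => (G.degree v : ℝ)) + G.adjMatrix ℝ

/-- The quasi-star graph `S_{n,2n-2} = K₂ ∨ (K_{1,1} ∪ (n-4)K₁)`:
vertices `0,1` are universal, and `2,3` are joined by an edge. -/
def quasiStar2n2 (n : ℕ) : SimpleGraph (Fin n) :=
  SimpleGraph.fromRel (fun a b => a.val < 2 ∨ (a.val < 4 ∧ b.val < 4))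

/-!
Take the partition of the vertices into the two universal vertices `{0, 1}`, the edge `{2, 3}` and
the remaining `n - 4` vertices of degree 2. A vector that is `1`, `b`, `c` on these classes is a
`Q`-eigenvector for `μ` exactly when `b = 2 / (μ - 4)`, `c = 2 / (μ - 2)` and
`μ - n = 2 b + (n - 4) c`, i.e. when `μ` is a root of the cubic
`(μ - n)(μ - 4)(μ - 2) = 4 (μ - 2) + 2 (n - 4)(μ - 4)`. That cubic is negative at `μ = n + 1.6`
and positive for large `μ`, so it has a root `μ ≥ n + 1.6`, which is then an eigenvalue of `Q`
and hence at most `q`.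
-/

lemma signlessLaplacian_mulVec_apply {n : ℕ} (G : SimpleGraph (Fin n)) [DecidableRel G.Adj]
    (x : Fin n → ℝ) (v : Fin n) :
    (signlessLaplacian G).mulVec x v = ∑ u ∈ G.neighborFinset v, (x v + x u) := by
  have hQ : signlessLaplacian G = diagonal (fun v => (G.degree v : ℝ)) + G.adjMatrix ℝ := by
    unfold signlessLaplacian; congr!
  rw [hQ, add_mulVec, Pi.add_apply, mulVec_diagonal, adjMatrix_mulVec_apply, Finset.sum_add_distrib,
    Finset.sum_const, nsmul_eq_mul, degree]

lemma Finset.sum_range_eq_sum_range_add_of_eq_on_Ico {M : Type*} [AddCommMonoid M] {k n : ℕ}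
    (hkn : k ≤ n) (w : ℕ → M) (c : M) (hw : ∀ i, k ≤ i → i < n → w i = c) :
    ∑ i ∈ Finset.range n, w i = ∑ i ∈ Finset.range k, w i + (n - k) • c := by
  rw [← Finset.sum_range_add_sum_Ico w hkn, Finset.sum_congr rfl fun i hi =>
    hw i (Finset.mem_Ico.1 hi).1 (Finset.mem_Ico.1 hi).2, Finset.sum_const, Nat.card_Ico]

lemma quasiStar2n2_adj {n : ℕ} {a b : Fin n} :
    (quasiStar2n2 n).Adj a b ↔ a.val ≠ b.val ∧ (a.val < 2 ∨ b.val < 2 ∨ (a.val < 4 ∧ b.val < 4)) := by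
  rw [quasiStar2n2, fromRel_adj, ne_eq, ← Fin.val_eq_val]
  omega

lemma signlessLaplacian_quasiStar2n2_mulVec_apply {n : ℕ} (y : ℕ → ℝ) (v : Fin n) :
    (signlessLaplacian (quasiStar2n2 n)).mulVec (fun u => y u) v =
      ∑ i ∈ Finset.range n,
        if v.val ≠ i ∧ (v.val < 2 ∨ i < 2 ∨ (v.val < 4 ∧ i < 4)) then y v + y i else 0 := by
  classical
  rw [signlessLaplacian_mulVec_apply, neighborFinset_eq_filter, Finset.sum_filter,
    ← Fin.sum_univ_eq_sum_range]
  simp only [quasiStar2n2_adj]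

def quasiStarProfile (b c : ℝ) (i : ℕ) : ℝ :=
  if i < 2 then 1 else if i < 4 then b else c

theorem signlessLaplacian_quasiStar2n2_mulVec_profile {n : ℕ} (hn : 4 ≤ n) {μ b c : ℝ}
    (h_univ : n + 2 * b + (n - 4) * c = μ) (h_edge : 4 * b + 2 = μ * b)
    (h_rest : 2 * c + 2 = μ * c) :
    (signlessLaplacian (quasiStar2n2 n)).mulVec (fun v : Fin n => quasiStarProfile b c v) =
      μ • fun v : Fin n => quasiStarProfile b c v := by
  funext ⟨k, hk⟩
  rw [signlessLaplacian_quasiStar2n2_mulVec_apply, Pi.smul_apply, smul_eq_mul]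
  dsimp only
  rcases lt_or_ge k 4 with hk4 | hk4
  · rw [Finset.sum_range_eq_sum_range_add_of_eq_on_Ico hn _ (if k < 2 then 1 + c else 0)]
    · interval_cases k <;> simp [Finset.sum_range_succ, quasiStarProfile, Nat.cast_sub hn] <;>
        linarith
    · intro i hi _
      simp only [quasiStarProfile, if_neg (show ¬ i < 2 by omega), if_neg (show ¬ i < 4 by omega)]
      split_ifs <;> first | rfl | (exfalso; omega)
  · rw [Finset.sum_range_eq_sum_range_add_of_eq_on_Ico hn _ 0]
    · simp [Finset.sum_range_succ, quasiStarProfile, show k ≠ 0 by omega, show k ≠ 1 by omega,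
        show ¬ k ≤ 1 by omega, show ¬ k < 4 by omega]
      linarith
    · intro i hi _
      rw [if_neg (by omega)]

lemma exists_quasiStar_quotient_root {N : ℝ} (hN : 4 ≤ N) :
    ∃ μ, N + 1.6 ≤ μ ∧ (μ - N) * (μ - 4) * (μ - 2) = 4 * (μ - 2) + 2 * (N - 4) * (μ - 4) := by
  let f : ℝ → ℝ := fun μ => (μ - N) * (μ - 4) * (μ - 2) - 4 * (μ - 2) - 2 * (N - 4) * (μ - 4)
  have hlo : f (N + 1.6) ≤ 0 := by simp only [f]; nlinarith [sq_nonneg (N - 5.4)]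
  have hhi : 0 ≤ f (2 * N + 8) := by
    have h : 0 ≤ N - 4 := by linarith
    simp only [f]; nlinarith [mul_nonneg (mul_nonneg h h) h, mul_nonneg h h]
  obtain ⟨μ, ⟨hμ, -⟩, hroot⟩ := intermediate_value_Icc (by linarith : N + 1.6 ≤ 2 * N + 8)
    (by fun_prop : Continuous f).continuousOn ⟨hlo, hhi⟩
  exact ⟨μ, hμ, by linarith [show f μ = 0 from hroot]⟩

theorem stmt17 {n : ℕ} (hn : 4 ≤ n)
    (q : ℝ) (hq : IsMaxEigenvalue (signlessLaplacian (quasiStar2n2 n)) q) :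
    (n : ℝ) + 1.6 ≤ q := by
  have hN : (4 : ℝ) ≤ n := by exact_mod_cast hn
  obtain ⟨μ, hμ, hroot⟩ := exists_quasiStar_quotient_root hN
  have hμ4 : μ - 4 ≠ 0 := by linarith
  have hμ2 : μ - 2 ≠ 0 := by linarith
  have hx : (fun v : Fin n => quasiStarProfile (2 / (μ - 4)) (2 / (μ - 2)) v) ≠ 0 :=
    fun h => by simpa [quasiStarProfile] using congrFun h ⟨0, by omega⟩
  refine hμ.trans (hq.2 μ _ hx (signlessLaplacian_quasiStar2n2_mulVec_profile hn ?_ ?_ ?_))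
  all_goals field_simp
  all_goals linarith
end
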